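/- Let f̄: Ω → ℝ be an α-Hölder normalized potential (L_{f̄} 1 ≡ 1) and γ_n(A|y) = L_{f̄}^n(1_A)(σ^n(y)). Let μ be a shift-invariant Borel probability measure such that μ restricted to F_{Λ_n} is absolutely continuous with respect to p^ℕ restricted to F_{Λ_n}. Then for every y ∈ Ω and every n ≥ 1, H_{Λ_n}(μ | γ_n(·|y)) = −H_{Λ_n}(μ) − ∫_Ω S_n(f̄)(x_{Λ_n} y_{Λ_n^c}) dμ(x). -/

import Mathlib

/-
On `F_{Λ_n}` the kernel `γ_n(·|y)` is `pⁿ` tilted by the density `a ↦ exp S_n(f̄)(a ⬝ σⁿ y)`, and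
`a ⬝ σⁿ y` is exactly `x_{Λ_n} y_{Λ_n^c}` for `a = x_{Λ_n}`. Tilting the reference measure by
`exp g` lowers the log-likelihood ratio by `g`, so the relative entropy drops by `∫ g dμ`. A Hölder
potential is continuous and bounded, so `g = S_n(f̄)` is integrable and the identity holds in
`EReal`, also when both sides are `+∞`.
-/

open MeasureTheory Filter
open scoped Classical

noncomputable section

namespace Paper

variable {A : Type*} [MetricSpace A] [CompactSpace A] [MeasurableSpace A] [BorelSpace A]

/-- The left shift `σ` on `Ω = Aᴺ`. -/
def shift (x : ℕ → A) : ℕ → A := fun n => x (n + 1)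

/-- Prepend a symbol: `cons a x = (a, x₀, x₁, …)`. -/
def cons (a : A) (x : ℕ → A) : ℕ → A := fun n =>
  match n with
  | 0 => a
  | n + 1 => x n

/-- The metric `d_Ω` on `Ω`. -/
def dOmega (x y : ℕ → A) : ℝ :=
  ∑' n : ℕ, (1 / 2 : ℝ) ^ (n + 1) * (dist (x n) (y n) / (1 + dist (x n) (y n)))

/-- `f` is `α`-Hölder with respect to `d_Ω`. -/
def IsHolder (α : ℝ) (f : (ℕ → A) → ℝ) : Prop :=
  ∃ C : ℝ, 0 ≤ C ∧ ∀ x y, |f x - f y| ≤ C * dOmega x y ^ α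

/-- The Ruelle transfer operator with a priori measure `p`. -/
def ruelle (p : Measure A) (f φ : (ℕ → A) → ℝ) : (ℕ → A) → ℝ :=
  fun x => ∫ a, Real.exp (f (cons a x)) * φ (cons a x) ∂p

/-- The normalized potential `f̄ = f + log h - log (h ∘ σ) - log λ`. -/
def fbar (f h : (ℕ → A) → ℝ) (lam : ℝ) : (ℕ → A) → ℝ :=
  fun x => f x + Real.log (h x) - Real.log (h (shift x)) - Real.log lam

/-- Projection on the first `n` coordinates. -/
def proj (n : ℕ) (x : ℕ → A) : Fin n → A := fun i => x i

/-- Relative entropy `H(μ|ν)` of two measures, with value `+∞` unless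
`μ ≪ ν` and the entropy integral is finite. -/
def relEnt {X : Type*} [MeasurableSpace X] (μ ν : Measure X) : EReal :=
  if μ ≪ ν ∧ Integrable (fun x => Real.log (μ.rnDeriv ν x).toReal) μ then
    ((∫ x, Real.log (μ.rnDeriv ν x).toReal ∂μ : ℝ) : EReal)
  else ⊤

/-- Relative entropy `H_{Λ_n}(μ|ν)` on the σ-algebra of the first `n` coordinates. -/
def relEntN (n : ℕ) (μ ν : Measure (ℕ → A)) : EReal :=
  relEnt (μ.map (proj n)) (ν.map (proj n))

/-- The entropy `H_{Λ_n}(μ) = -H_{Λ_n}(μ | pᴺ)` relative to the a priori measure `p`. -/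
def finEnt (p : Measure A) (μ : Measure (ℕ → A)) (n : ℕ) : EReal :=
  - relEnt (μ.map (proj n)) (Measure.pi fun _ : Fin n => p)

/-- The specific entropy `h^s(μ) = lim_n H_{Λ_n}(μ)/n` (defined as a `limsup`,
which coincides with the limit whenever the latter exists). -/
def specEnt (p : Measure A) (μ : Measure (ℕ → A)) : EReal :=
  Filter.atTop.limsup fun n : ℕ => ((n : ℝ)⁻¹ : EReal) * finEnt p μ n

/-- Birkhoff sum `S_n(f)`. -/
def birkhoff (n : ℕ) (f : (ℕ → A) → ℝ) (x : ℕ → A) : ℝ :=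
  ∑ i ∈ Finset.range n, f (shift^[i] x)

/-- The configuration `x_{Λ_n} y_{Λ_n^c}`. -/
def concatAt (n : ℕ) (x y : ℕ → A) : ℕ → A := fun i => if i < n then x i else y i

/-- Concatenation of a finite word with a configuration. -/
def wordCons (n : ℕ) (a : Fin n → A) (x : ℕ → A) : ℕ → A :=
  fun i => if h : i < n then a ⟨i, h⟩ else x (i - n)

/-- The probability kernel `γ_n(·|y) = L_f^n(1_·)(σ^n y)`, realized concretely as the
image under `a ↦ a ⬝ σ^n(y)` of the measure on `A^n` with density
`a ↦ exp(S_n(f)(a ⬝ σ^n(y)))` with respect to `p^n`. -/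
def gammaMeasure (p : Measure A) (f : (ℕ → A) → ℝ) (n : ℕ) (y : ℕ → A) :
    Measure (ℕ → A) :=
  Measure.map (fun a : Fin n → A => wordCons n a (shift^[n] y))
    ((Measure.pi fun _ : Fin n => p).withDensity
      fun a => ENNReal.ofReal (Real.exp (birkhoff n f (wordCons n a (shift^[n] y)))))

end Paper

namespace Paper

section RelativeEntropy

variable {X : Type*} [MeasurableSpace X] {μ ν : Measure X}

lemma relEnt_of_integrable (hμν : μ ≪ ν) (h : Integrable (llr μ ν) μ) :
    relEnt μ ν = ((∫ x, llr μ ν x ∂μ : ℝ) : EReal) :=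
  if_pos ⟨hμν, h⟩

lemma relEnt_of_not_integrable (h : ¬ Integrable (llr μ ν) μ) : relEnt μ ν = ⊤ :=
  if_neg fun h' => h h'.2

variable [SigmaFinite μ] [SigmaFinite ν] {g : X → ℝ}

lemma llr_withDensity_exp_right (hμν : μ ≪ ν) (hg : Measurable g) :
    llr μ (ν.withDensity fun x => ENNReal.ofReal (Real.exp (g x)))
      =ᵐ[μ] fun x => llr μ ν x - g x := by
  have hG : AEMeasurable (fun x => ENNReal.ofReal (Real.exp (g x))) ν := by fun_prop
  filter_upwards [hμν.ae_le (Measure.rnDeriv_withDensity_right μ ν hG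
      (ae_of_all _ fun x => by simp [Real.exp_pos]) (ae_of_all _ fun _ => ENNReal.ofReal_ne_top)),
    Measure.rnDeriv_pos hμν, hμν.ae_le (Measure.rnDeriv_lt_top μ ν)] with x hx hpos hlt
  rw [llr, hx, ENNReal.toReal_mul, ENNReal.toReal_inv, ENNReal.toReal_ofReal (Real.exp_nonneg _),
    Real.log_mul (by positivity) (ENNReal.toReal_pos hpos.ne' hlt.ne).ne', Real.log_inv,
    Real.log_exp, llr]
  ring

lemma relEnt_withDensity_exp_right (hμν : μ ≪ ν) (hg : Measurable g) (hgμ : Integrable g μ) :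
    relEnt μ (ν.withDensity fun x => ENNReal.ofReal (Real.exp (g x)))
      = relEnt μ ν - ((∫ x, g x ∂μ : ℝ) : EReal) := by
  have hllr := llr_withDensity_exp_right hμν hg
  have hμν' : μ ≪ ν.withDensity fun x => ENNReal.ofReal (Real.exp (g x)) :=
    hμν.trans (withDensity_absolutelyContinuous' (by fun_prop)
      (ae_of_all _ fun x => by simp [Real.exp_pos]))
  by_cases hI : Integrable (llr μ ν) μ
  · rw [relEnt_of_integrable hμν' ((integrable_congr hllr).mpr (hI.sub hgμ)),
      relEnt_of_integrable hμν hI, integral_congr_ae hllr, integral_sub hI hgμ, EReal.coe_sub]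
  · have hI' : ¬ Integrable (llr μ (ν.withDensity fun x => ENNReal.ofReal (Real.exp (g x)))) μ :=
      fun h => hI (((integrable_congr hllr).mp h).add hgμ |>.congr
        (ae_of_all _ fun x => sub_add_cancel (llr μ ν x) (g x)))
    rw [relEnt_of_not_integrable hI', relEnt_of_not_integrable hI, EReal.top_sub_coe]

end RelativeEntropy

section Holder

variable {A : Type*} [MetricSpace A]

lemma dOmega_term_nonneg (x y : ℕ → A) (i : ℕ) :
    0 ≤ (1 / 2 : ℝ) ^ (i + 1) * (dist (x i) (y i) / (1 + dist (x i) (y i))) := by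
  have := dist_nonneg (x := x i) (y := y i)
  positivity

lemma dOmega_term_le (x y : ℕ → A) (i : ℕ) :
    (1 / 2 : ℝ) ^ (i + 1) * (dist (x i) (y i) / (1 + dist (x i) (y i)))
      ≤ (1 / 2 : ℝ) ^ (i + 1) := by
  have hd := dist_nonneg (x := x i) (y := y i)
  refine mul_le_of_le_one_right (by positivity) ?_
  rw [div_le_one (by linarith)]
  linarith

lemma hasSum_half_pow_succ : HasSum (fun i : ℕ => (1 / 2 : ℝ) ^ (i + 1)) 1 := by
  simpa [pow_succ] using hasSum_geometric_two.mul_right (1 / 2 : ℝ)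

lemma dOmega_le_one (x y : ℕ → A) : dOmega x y ≤ 1 :=
  hasSum_le (dOmega_term_le x y)
    (Summable.of_nonneg_of_le (dOmega_term_nonneg x y) (dOmega_term_le x y)
      hasSum_half_pow_succ.summable).hasSum hasSum_half_pow_succ

lemma dOmega_self (x : ℕ → A) : dOmega x x = 0 := by
  simp [dOmega]

lemma continuous_dOmega_right (x : ℕ → A) : Continuous (dOmega x) := by
  refine continuous_tsum (fun i => ?_) hasSum_half_pow_succ.summable fun i z => ?_
  · have hd : Continuous fun z : ℕ → A => dist (x i) (z i) :=
      continuous_const.dist (continuous_apply i)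
    exact continuous_const.mul (hd.div (continuous_const.add hd) fun z => by positivity)
  · rw [Real.norm_of_nonneg (dOmega_term_nonneg x z i)]
    exact dOmega_term_le x z i

lemma IsHolder.continuous {α : ℝ} (hα : 0 < α) {f : (ℕ → A) → ℝ} (hf : IsHolder α f) :
    Continuous f := by
  obtain ⟨C, -, hC⟩ := hf
  refine continuous_iff_continuousAt.mpr fun x => tendsto_iff_dist_tendsto_zero.mpr ?_
  have hbound : Tendsto (fun z => C * dOmega x z ^ α) (nhds x) (nhds 0) := by
    have := (((continuous_dOmega_right x).rpow_const fun _ => Or.inr hα.le).const_mul C).tendsto x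
    simpa [dOmega_self, Real.zero_rpow hα.ne'] using this
  refine squeeze_zero (fun _ => dist_nonneg) (fun z => ?_) hbound
  rw [Real.dist_eq, abs_sub_comm]
  exact hC x z

lemma IsHolder.exists_abs_le {α : ℝ} (hα : 0 ≤ α) {f : (ℕ → A) → ℝ} (hf : IsHolder α f) :
    ∃ M, ∀ x, |f x| ≤ M := by
  obtain ⟨C, hC0, hC⟩ := hf
  rcases isEmpty_or_nonempty (ℕ → A) with hA | ⟨⟨y⟩⟩
  · exact ⟨0, fun x => hA.elim x⟩
  refine ⟨|f y| + C, fun x => ?_⟩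
  have hxy : |f x - f y| ≤ C := (hC x y).trans (mul_le_of_le_one_right hC0
    (Real.rpow_le_one (tsum_nonneg (dOmega_term_nonneg x y)) (dOmega_le_one x y) hα))
  linarith [abs_sub_abs_le_abs_sub (f x) (f y)]

end Holder

section Birkhoff

variable {A : Type*}

lemma continuous_shift [TopologicalSpace A] : Continuous (shift : (ℕ → A) → ℕ → A) :=
  continuous_pi fun i => continuous_apply (i + 1)

lemma continuous_birkhoff [TopologicalSpace A] (n : ℕ) {f : (ℕ → A) → ℝ} (hf : Continuous f) :
    Continuous (birkhoff n f) :=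
  continuous_finsetSum _ fun i _ => hf.comp (continuous_shift.iterate i)

lemma abs_birkhoff_le {f : (ℕ → A) → ℝ} {M : ℝ} (hM : ∀ x, |f x| ≤ M) (n : ℕ) (x : ℕ → A) :
    |birkhoff n f x| ≤ n * M :=
  calc |birkhoff n f x| ≤ ∑ i ∈ Finset.range n, |f (shift^[i] x)| := Finset.abs_sum_le_sum_abs _ _
    _ ≤ ∑ _i ∈ Finset.range n, M := Finset.sum_le_sum fun _ _ => hM _
    _ = n * M := by simp

end Birkhoff

section Words

variable {A : Type*}

lemma shift_iterate_apply (k : ℕ) (y : ℕ → A) (i : ℕ) : shift^[k] y i = y (i + k) := by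
  induction k generalizing y with
  | zero => rfl
  | succ k ih => rw [Function.iterate_succ_apply, ih]; rfl

lemma proj_wordCons (n : ℕ) (a : Fin n → A) (z : ℕ → A) : proj n (wordCons n a z) = a := by
  funext i
  simp [proj, wordCons, i.isLt]

lemma wordCons_proj_shift_iterate (n : ℕ) (x y : ℕ → A) :
    wordCons n (proj n x) (shift^[n] y) = concatAt n x y := by
  funext i
  by_cases h : i < n
  · simp [wordCons, proj, concatAt, h]
  · simp [wordCons, concatAt, h, shift_iterate_apply, Nat.sub_add_cancel (not_lt.mp h)]

variable [MeasurableSpace A]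

lemma measurable_proj (n : ℕ) : Measurable (proj n : (ℕ → A) → Fin n → A) :=
  measurable_pi_lambda _ fun _ => measurable_pi_apply _

lemma measurable_wordCons (n : ℕ) (z : ℕ → A) : Measurable fun a : Fin n → A => wordCons n a z :=
  measurable_pi_lambda _ fun i => by
    by_cases h : i < n
    · simpa [wordCons, h] using measurable_pi_apply (⟨i, h⟩ : Fin n)
    · simp [wordCons, h]

lemma map_proj_gammaMeasure (p : Measure A) (f : (ℕ → A) → ℝ) (n : ℕ) (y : ℕ → A) :
    (gammaMeasure p f n y).map (proj n) = (Measure.pi fun _ : Fin n => p).withDensity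
      fun a => ENNReal.ofReal (Real.exp (birkhoff n f (wordCons n a (shift^[n] y)))) := by
  rw [gammaMeasure, Measure.map_map (measurable_proj n) (measurable_wordCons n _)]
  simp [Function.comp_def, proj_wordCons]

end Words

variable {A : Type*} [MetricSpace A] [CompactSpace A] [MeasurableSpace A] [BorelSpace A]

theorem statement9_general
    (p : Measure A) [IsProbabilityMeasure p]
    (α : ℝ) (hα0 : 0 < α)
    (f : (ℕ → A) → ℝ) (hf : IsHolder α f)
    (μ : Measure (ℕ → A)) [IsProbabilityMeasure μ]
    (hac : ∀ m : ℕ, μ.map (proj m) ≪ Measure.pi fun _ : Fin m => p)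
    (y : ℕ → A) (n : ℕ) :
    relEntN n μ (gammaMeasure p f n y)
      = relEnt (μ.map (proj n)) (Measure.pi fun _ : Fin n => p)
        - ((∫ x, birkhoff n f (concatAt n x y) ∂μ : ℝ) : EReal) := by
  obtain ⟨M, hM⟩ := hf.exists_abs_le hα0.le
  have hS : Measurable fun a : Fin n → A => birkhoff n f (wordCons n a (shift^[n] y)) :=
    (continuous_birkhoff n (hf.continuous hα0)).measurable.comp (measurable_wordCons n _)
  have : IsProbabilityMeasure (μ.map (proj n)) :=
    Measure.isProbabilityMeasure_map (measurable_proj n).aemeasurable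
  rw [relEntN, map_proj_gammaMeasure, relEnt_withDensity_exp_right (hac n) hS
      (.of_bound hS.aestronglyMeasurable (n * M) (ae_of_all _ fun _ => abs_birkhoff_le hM n _)),
    integral_map (measurable_proj n).aemeasurable hS.aestronglyMeasurable]
  simp only [wordCons_proj_shift_iterate]

/-- Let `f̄` be an `α`-Hölder normalized potential and
`γ_n(·|y) = L_{f̄}^n(1_·)(σ^n y)`. If `μ` is a shift-invariant Borel probability measure
whose restriction to `F_{Λ_n}` is absolutely continuous w.r.t. that of `pᴺ`, then for all
`y` and `n ≥ 1`,
`H_{Λ_n}(μ | γ_n(·|y)) = -H_{Λ_n}(μ) - ∫ S_n(f̄)(x_{Λ_n} y_{Λ_n^c}) dμ(x)`. -/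
theorem statement9
    (p : Measure A) [IsProbabilityMeasure p]
    (hsupp : ∀ U : Set A, IsOpen U → U.Nonempty → 0 < p U)
    (α : ℝ) (hα0 : 0 < α) (hα1 : α < 1)
    (f : (ℕ → A) → ℝ) (hf : IsHolder α f)
    (hnorm : ∀ x, ruelle p f (fun _ => 1) x = 1)
    (μ : Measure (ℕ → A)) [IsProbabilityMeasure μ]
    (hinv : μ.map shift = μ)
    (hac : ∀ m : ℕ, μ.map (proj m) ≪ Measure.pi fun _ : Fin m => p)
    (y : ℕ → A) (n : ℕ) (hn : 1 ≤ n) :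
    relEntN n μ (gammaMeasure p f n y)
      = relEnt (μ.map (proj n)) (Measure.pi fun _ : Fin n => p)
        - ((∫ x, birkhoff n f (concatAt n x y) ∂μ : ℝ) : EReal) :=
  statement9_general p α hα0 f hf μ hac y n

end Paper
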